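/- Lemma 2, parts 1–2 (Submartingale sequence). Let θ_TX = θ₀ and run the partial-information algorithm with self-awareness. Define m_i := Σ_{k=1}^K v_k log μ_{k,i}(θ_TX), the filtration F_j := σ(ξ_1,…,ξ_j), and for a belief vector μ in the simplex, δ_k(μ) := E[log(L_k(ξ_{k,i}|θ₀) / Σ_{θ∈Θ} μ(θ) L_k(ξ_{k,i}|θ))]. Then: (1) E[m_i | F_{i−1}] ≥ m_{i−1} + Σ_{k=1}^K v_k δ_k(μ_{k,i−1}) almost surely; (2) the sequence (m_i) is a nonpositive submartingale with respect to the filtration (F_i). -/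

import Mathlib

open MeasureTheory ProbabilityTheory Filter Topology
open Real Finset

/-!
Write `m_i = ∑ k, v k log μ_{k,i}(θ₀)`. Bayes' rule gives
`log ψ_{k,i}(θ₀) = log μ_{k,i-1}(θ₀) + log (L_k(ξ_{k,i}|θ₀) / ∑_θ μ_{k,i-1}(θ) L_k(ξ_{k,i}|θ))`.
Since `θ_TX = θ₀`, every shared belief `ψ̂_ℓ` agrees with `ψ_ℓ` at `θ₀`, and by weighted AM-GM
the normaliser of the geometric pooling is at most `1`; so
`log μ_{k,i}(θ₀) ≥ ∑ ℓ, a_{ℓk} log ψ_{ℓ,i}(θ₀)`, and averaging with the Perron vector `v` bounds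
`m_i` below by `m_{i-1}` plus the weighted log-likelihood ratios of the new signals. These signals
are independent of `F_{i-1}`, so conditioning integrates them out against their law `L_k(·|θ₀)`,
which gives part 1. The resulting drift is a weighted sum of divergences between `L_k(·|θ₀)` and a
mixture of the `L_k(·|θ)`, hence nonnegative by Gibbs' inequality, and `m_i ≤ 0` because beliefs
are at most `1`.
-/

noncomputable section Beliefs

variable {ι Θ : Type*}

theorem exp_sum_mul_log_le_sum_mul (s : Finset ι) {w x : ι → ℝ} (hw : ∀ i ∈ s, 0 ≤ w i)
    (hw1 : ∑ i ∈ s, w i = 1) (hx : ∀ i ∈ s, 0 < x i) :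
    exp (∑ i ∈ s, w i * log (x i)) ≤ ∑ i ∈ s, w i * x i := by
  rw [exp_sum]
  convert geom_mean_le_arith_mean_weighted s w x hw hw1 fun i hi => (hx i hi).le using 2
    with i hi
  rw [rpow_def_of_pos (hx i hi), mul_comm]

theorem abs_log_div_sum_mul_le [Fintype Θ] {c y : Θ → ℝ} (hc : ∀ θ, 0 < c θ) (hy : ∀ θ, 0 ≤ y θ)
    (hy1 : ∑ θ, y θ = 1) (θ₀ : Θ) :
    |log (c θ₀ / ∑ θ, y θ * c θ)| ≤ ∑ θ, |log (c θ₀ / c θ)| := by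
  obtain ⟨θmax, -, hmax⟩ := exists_max_image univ c ⟨θ₀, mem_univ _⟩
  obtain ⟨θmin, -, hmin⟩ := exists_min_image univ c ⟨θ₀, mem_univ _⟩
  have hmean : ∀ b, ∑ θ, y θ * b = b := fun b => by rw [← sum_mul, hy1, one_mul]
  have hq_le : ∑ θ, y θ * c θ ≤ c θmax := (hmean (c θmax)).symm ▸
    sum_le_sum fun θ _ => mul_le_mul_of_nonneg_left (hmax θ (mem_univ θ)) (hy θ)
  have hle_q : c θmin ≤ ∑ θ, y θ * c θ := (hmean (c θmin)).symm ▸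
    sum_le_sum fun θ _ => mul_le_mul_of_nonneg_left (hmin θ (mem_univ θ)) (hy θ)
  have hq : 0 < ∑ θ, y θ * c θ := (hc θmin).trans_le hle_q
  have hterm : ∀ θ', |log (c θ₀ / c θ')| ≤ ∑ θ, |log (c θ₀ / c θ)| := fun θ' =>
    single_le_sum (f := fun θ => |log (c θ₀ / c θ)|) (fun _ _ => abs_nonneg _) (mem_univ θ')
  calc |log (c θ₀ / ∑ θ, y θ * c θ)|
      ≤ max |log (c θ₀ / c θmax)| |log (c θ₀ / c θmin)| := by
        refine abs_le_max_abs_abs ?_ ?_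
        · exact log_le_log (div_pos (hc _) (hc _)) (div_le_div_of_nonneg_left (hc _).le hq hq_le)
        · exact log_le_log (div_pos (hc _) hq) (div_le_div_of_nonneg_left (hc _).le (hc _) hle_q)
    _ ≤ ∑ θ, |log (c θ₀ / c θ)| := max_le (hterm θmax) (hterm θmin)

theorem measurable_sum_mul_log [Fintype ι] (v : ι → ℝ) (θ : Θ) :
    Measurable fun μ : ι → Θ → ℝ => ∑ k, v k * log (μ k θ) := by
  fun_prop

variable [Fintype ι] [Fintype Θ]

structure IsPosProbVec (μ : Θ → ℝ) : Prop where
  pos : ∀ θ, 0 < μ θ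
  sum_eq_one : ∑ θ, μ θ = 1

theorem IsPosProbVec.nonempty {μ : Θ → ℝ} (hμ : IsPosProbVec μ) : Nonempty Θ := by
  by_contra h
  have := hμ.sum_eq_one
  simp [not_nonempty_iff.mp h] at this

theorem IsPosProbVec.le_one {μ : Θ → ℝ} (hμ : IsPosProbVec μ) (θ : Θ) : μ θ ≤ 1 :=
  hμ.sum_eq_one ▸ single_le_sum (fun θ _ => (hμ.pos θ).le) (mem_univ θ)

theorem sum_mul_log_nonpos {v : ι → ℝ} (hv : ∀ k, 0 ≤ v k)
    {μ : ι → Θ → ℝ} (hμ : ∀ k, IsPosProbVec (μ k)) (θ : Θ) : ∑ k, v k * log (μ k θ) ≤ 0 :=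
  sum_nonpos fun k _ => mul_nonpos_of_nonneg_of_nonpos (hv k)
    (log_nonpos ((hμ k).pos θ).le ((hμ k).le_one θ))

def bayesUpdate (μ lik : Θ → ℝ) : Θ → ℝ :=
  fun θ => μ θ * lik θ / ∑ θ', μ θ' * lik θ'

/-- Its expectation under `L_k(·|θ₀)`, with `lik θ = L_k(x|θ)`, is the paper's `δ_k(μ)`. -/
def logMixtureRatio (θ₀ : Θ) (μ lik : Θ → ℝ) : ℝ :=
  log (lik θ₀ / ∑ θ, μ θ * lik θ)

theorem IsPosProbVec.sum_mul_pos {μ lik : Θ → ℝ} (hμ : IsPosProbVec μ)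
    (hlik : ∀ θ, 0 < lik θ) : 0 < ∑ θ, μ θ * lik θ :=
  have := hμ.nonempty
  sum_pos (fun θ _ => mul_pos (hμ.pos θ) (hlik θ)) univ_nonempty

theorem isPosProbVec_bayesUpdate {μ lik : Θ → ℝ} (hμ : IsPosProbVec μ)
    (hlik : ∀ θ, 0 < lik θ) : IsPosProbVec (bayesUpdate μ lik) where
  pos θ := div_pos (mul_pos (hμ.pos θ) (hlik θ)) (hμ.sum_mul_pos hlik)
  sum_eq_one := by
    simp only [bayesUpdate]
    rw [← sum_div, div_self (hμ.sum_mul_pos hlik).ne']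

theorem log_bayesUpdate {μ lik : Θ → ℝ} (hμ : IsPosProbVec μ) (hlik : ∀ θ, 0 < lik θ)
    (θ : Θ) : log (bayesUpdate μ lik θ) = log (μ θ) + logMixtureRatio θ μ lik := by
  have hq := hμ.sum_mul_pos hlik
  rw [bayesUpdate, logMixtureRatio, mul_div_assoc, log_mul (hμ.pos θ).ne'
    (div_pos (hlik θ) hq).ne']

theorem measurable_bayesUpdate :
    Measurable fun p : (Θ → ℝ) × (Θ → ℝ) => bayesUpdate p.1 p.2 := by
  unfold bayesUpdate
  fun_prop

def geomPool (w : ι → ℝ) (f : ι → Θ → ℝ) : Θ → ℝ :=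
  fun θ => exp (∑ ℓ, w ℓ * log (f ℓ θ)) / ∑ θ', exp (∑ ℓ, w ℓ * log (f ℓ θ'))

theorem isPosProbVec_geomPool [Nonempty Θ] (w : ι → ℝ) (f : ι → Θ → ℝ) :
    IsPosProbVec (geomPool w f) where
  pos θ := div_pos (exp_pos _) (sum_pos (fun _ _ => exp_pos _) univ_nonempty)
  sum_eq_one := by
    simp only [geomPool]
    rw [← sum_div, div_self (sum_pos (fun _ _ => exp_pos _) univ_nonempty).ne']

theorem sum_mul_log_le_log_geomPool {w : ι → ℝ} (hw : ∀ ℓ, 0 ≤ w ℓ) (hw1 : ∑ ℓ, w ℓ = 1)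
    {f : ι → Θ → ℝ} (hf : ∀ ℓ, IsPosProbVec (f ℓ)) (θ : Θ) [Nonempty Θ] :
    ∑ ℓ, w ℓ * log (f ℓ θ) ≤ log (geomPool w f θ) := by
  have hZ : 0 < ∑ θ', exp (∑ ℓ, w ℓ * log (f ℓ θ')) :=
    sum_pos (fun _ _ => exp_pos _) univ_nonempty
  -- weighted AM-GM bounds the normalizer by `∑ θ', ∑ ℓ, w ℓ * f ℓ θ' = 1`
  have hZ_le : ∑ θ', exp (∑ ℓ, w ℓ * log (f ℓ θ')) ≤ 1 := calc
    _ ≤ ∑ θ', ∑ ℓ, w ℓ * f ℓ θ' := sum_le_sum fun θ' _ => exp_sum_mul_log_le_sum_mul univ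
          (fun ℓ _ => hw ℓ) hw1 fun ℓ _ => (hf ℓ).pos θ'
    _ = 1 := by simp_rw [sum_comm (γ := Θ), ← mul_sum, fun ℓ => (hf ℓ).sum_eq_one, mul_one, hw1]
  rw [geomPool, log_div (exp_pos _).ne' hZ.ne', log_exp]
  linarith [log_nonpos hZ.le hZ_le]

theorem measurable_geomPool (w : ι → ℝ) : Measurable (geomPool (Θ := Θ) w) := by
  unfold geomPool
  fun_prop

theorem sum_mul_sum_mul_eq_of_eigen {a : ι → ι → ℝ} {v : ι → ℝ}
    (hv : ∀ ℓ, ∑ k, a ℓ k * v k = v ℓ) (x : ι → ℝ) :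
    ∑ k, v k * ∑ ℓ, a ℓ k * x ℓ = ∑ ℓ, v ℓ * x ℓ := by
  simp only [mul_sum]
  rw [sum_comm]
  refine sum_congr rfl fun ℓ _ => ?_
  rw [← hv ℓ, sum_mul]
  exact sum_congr rfl fun k _ => by ring

variable [DecidableEq Θ]

/-- The shared belief `ψ̂` of the paper. -/
def spreadComplement (θTX : Θ) (ψ : Θ → ℝ) : Θ → ℝ :=
  fun θ => if θ = θTX then ψ θTX else (1 - ψ θTX) / (Fintype.card Θ - 1)

theorem isPosProbVec_spreadComplement {ψ : Θ → ℝ} (hψ : IsPosProbVec ψ) (θTX : Θ) :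
    IsPosProbVec (spreadComplement θTX ψ) := by
  rcases subsingleton_or_nontrivial Θ with hΘ | hΘ
  · have h : spreadComplement θTX ψ = ψ := funext fun θ => by
      simp [spreadComplement, Subsingleton.elim θ θTX]
    rwa [h]
  have hcard : (1 : ℝ) < Fintype.card Θ := by exact_mod_cast Fintype.one_lt_card
  have hlt : ψ θTX < 1 := by
    obtain ⟨θ, hθ⟩ := exists_ne θTX
    have := add_le_sum (fun θ _ => (hψ.pos θ).le) (mem_univ θTX) (mem_univ θ) hθ.symm
    linarith [hψ.sum_eq_one, hψ.pos θ]
  constructor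
  · intro θ
    unfold spreadComplement
    split_ifs
    · exact hψ.pos θTX
    · exact div_pos (by linarith) (by linarith)
  · unfold spreadComplement
    rw [← add_sum_erase _ _ (mem_univ θTX), sum_congr rfl fun θ hθ =>
      if_neg (ne_of_mem_erase hθ), sum_const, card_erase_of_mem (mem_univ _), card_univ,
      nsmul_eq_mul, Nat.cast_pred Fintype.card_pos, if_pos rfl,
      mul_div_cancel₀ _ (by linarith)]
    ring

theorem spreadComplement_self (θTX : Θ) (ψ : Θ → ℝ) : spreadComplement θTX ψ θTX = ψ θTX :=
  if_pos rfl

variable [DecidableEq ι]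

/-- One round `μ_{·,i-1} ↦ μ_{·,i}` of the algorithm, where `lik k θ = L_k(ξ_{k,i}|θ)`. -/
def selfAwareStep (a : ι → ι → ℝ) (θTX : Θ) (lik μ : ι → Θ → ℝ) : ι → Θ → ℝ :=
  fun k => geomPool (fun ℓ => a ℓ k) (Function.update
    (fun ℓ => spreadComplement θTX (bayesUpdate (μ ℓ) (lik ℓ))) k (bayesUpdate (μ k) (lik k)))

theorem isPosProbVec_selfAwareStep (a : ι → ι → ℝ) (θTX : Θ) (lik μ : ι → Θ → ℝ) (k : ι)
    [Nonempty Θ] : IsPosProbVec (selfAwareStep a θTX lik μ k) :=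
  isPosProbVec_geomPool _ _

theorem isPosProbVec_of_eq_selfAwareStep {α : Type*} {a : ι → ι → ℝ} {θTX : Θ}
    {M lik : ℕ → α → ι → Θ → ℝ} (h0 : ∀ ω k, IsPosProbVec (M 0 ω k))
    (hstep : ∀ i ω, M (i + 1) ω = selfAwareStep a θTX (lik i ω) (M i ω)) :
    ∀ i ω k, IsPosProbVec (M i ω k)
  | 0, ω, k => h0 ω k
  | i + 1, ω, k => have : Nonempty Θ := ⟨θTX⟩; hstep i ω ▸ isPosProbVec_selfAwareStep _ _ _ _ k

theorem sum_mul_log_add_le_sum_mul_log_selfAwareStep {a : ι → ι → ℝ}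
    (ha : ∀ ℓ k, 0 ≤ a ℓ k) (ha1 : ∀ k, ∑ ℓ, a ℓ k = 1) {v : ι → ℝ} (hv0 : ∀ k, 0 ≤ v k)
    (hv : ∀ ℓ, ∑ k, a ℓ k * v k = v ℓ) {lik μ : ι → Θ → ℝ} (hlik : ∀ k θ, 0 < lik k θ)
    (hμ : ∀ k, IsPosProbVec (μ k)) (θTX : Θ) :
    ∑ k, v k * log (μ k θTX) + ∑ k, v k * logMixtureRatio θTX (μ k) (lik k) ≤
      ∑ k, v k * log (selfAwareStep a θTX lik μ k θTX) := by
  set ψ := fun ℓ => bayesUpdate (μ ℓ) (lik ℓ)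
  have hψ : ∀ ℓ, IsPosProbVec (ψ ℓ) := fun ℓ => isPosProbVec_bayesUpdate (hμ ℓ) (hlik ℓ)
  have : Nonempty Θ := ⟨θTX⟩
  calc ∑ k, v k * log (μ k θTX) + ∑ k, v k * logMixtureRatio θTX (μ k) (lik k)
      = ∑ k, v k * ∑ ℓ, a ℓ k * log (ψ ℓ θTX) := by
        rw [sum_mul_sum_mul_eq_of_eigen hv, ← sum_add_distrib]
        exact sum_congr rfl fun ℓ _ => by rw [log_bayesUpdate (hμ ℓ) (hlik ℓ)]; ring
    _ ≤ ∑ k, v k * log (selfAwareStep a θTX lik μ k θTX) := by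
      refine sum_le_sum fun k _ => mul_le_mul_of_nonneg_left ?_ (hv0 k)
      have hupdate : ∀ ℓ, Function.update (fun ℓ => spreadComplement θTX (ψ ℓ)) k (ψ k) ℓ θTX =
          ψ ℓ θTX := fun ℓ => by
        rcases eq_or_ne ℓ k with rfl | h
        · rw [Function.update_self]
        · rw [Function.update_of_ne h, spreadComplement_self]
      simp_rw [← hupdate]
      refine sum_mul_log_le_log_geomPool (ha · k) (ha1 k) (fun ℓ => ?_) θTX
      rcases eq_or_ne ℓ k with rfl | h
      · rw [Function.update_self]; exact hψ ℓ
      · rw [Function.update_of_ne h]; exact isPosProbVec_spreadComplement (hψ ℓ) θTX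

theorem eq_selfAwareStep {a : ι → ι → ℝ} {θTX : Θ} {lik μ ψ ψh μ' : ι → Θ → ℝ}
    (hψ : ∀ k θ, ψ k θ = μ k θ * lik k θ / ∑ θ', μ k θ' * lik k θ')
    (hψh_tx : ∀ k, ψh k θTX = ψ k θTX)
    (hψh_ntx : ∀ k θ, θ ≠ θTX → ψh k θ = (1 - ψ k θTX) / (Fintype.card Θ - 1))
    (hμ' : ∀ k θ, μ' k θ =
      exp (a k k * log (ψ k θ) + ∑ ℓ ∈ univ.erase k, a ℓ k * log (ψh ℓ θ)) /
        ∑ θ', exp (a k k * log (ψ k θ') + ∑ ℓ ∈ univ.erase k, a ℓ k * log (ψh ℓ θ'))) :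
    μ' = selfAwareStep a θTX lik μ := by
  have hψ_eq : ψ = fun ℓ => bayesUpdate (μ ℓ) (lik ℓ) := funext₂ hψ
  have hψh_eq : ψh = fun ℓ => spreadComplement θTX (ψ ℓ) := by
    ext ℓ θ
    rcases eq_or_ne θ θTX with rfl | h
    · rw [hψh_tx, spreadComplement_self]
    · rw [hψh_ntx ℓ θ h, spreadComplement, if_neg h]
  have hpool : ∀ k θ, a k k * log (ψ k θ) + ∑ ℓ ∈ univ.erase k, a ℓ k * log (ψh ℓ θ) =
      ∑ ℓ, a ℓ k * log (Function.update ψh k (ψ k) ℓ θ) := fun k θ => by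
    rw [← add_sum_erase _ _ (mem_univ k), Function.update_self]
    exact congrArg _ (sum_congr rfl fun ℓ hℓ => by rw [Function.update_of_ne (ne_of_mem_erase hℓ)])
  ext k θ
  rw [hμ']
  simp only [hpool]
  subst hψh_eq hψ_eq
  rfl

theorem measurable_spreadComplement (θTX : Θ) : Measurable (spreadComplement θTX) := by
  refine measurable_pi_lambda _ fun θ => ?_
  unfold spreadComplement
  split_ifs <;> fun_prop

theorem measurable_selfAwareStep (a : ι → ι → ℝ) (θTX : Θ) :
    Measurable fun p : (ι → Θ → ℝ) × (ι → Θ → ℝ) => selfAwareStep a θTX p.1 p.2 := by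
  have hψ : Measurable fun (p : (ι → Θ → ℝ) × (ι → Θ → ℝ)) (ℓ : ι) => bayesUpdate (p.2 ℓ) (p.1 ℓ) :=
    measurable_pi_lambda _ fun ℓ =>
      measurable_bayesUpdate.comp
        (f := fun p : (ι → Θ → ℝ) × (ι → Θ → ℝ) => (p.2 ℓ, p.1 ℓ)) (by fun_prop)
  refine measurable_pi_lambda _ fun k => (measurable_geomPool _).comp
    (measurable_update'.comp (Measurable.prodMk ?_ ((measurable_pi_apply k).comp hψ)))
  exact measurable_pi_lambda _ fun ℓ =>
    (measurable_spreadComplement θTX).comp ((measurable_pi_apply ℓ).comp hψ)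

end Beliefs

section IndependentPairs

variable {Ω α β : Type*} {mΩ : MeasurableSpace Ω} {mα : MeasurableSpace α}
  {mβ : MeasurableSpace β} {P : Measure Ω} {W : Ω → α} {X : Ω → β} {h : α → β → ℝ}

theorem integral_comp_eq_integral_map (hX : Measurable X) (hh : Measurable (Function.uncurry h))
    (w : α) : ∫ ω', h w (X ω') ∂P = ∫ x, h w x ∂(P.map X) :=
  (integral_map hX.aemeasurable (hh.comp measurable_prodMk_left).aestronglyMeasurable).symm

variable [IsFiniteMeasure P]

theorem ProbabilityTheory.IndepFun.integrable_uncurry (hWX : IndepFun W X P)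
    (hW : Measurable W) (hX : Measurable X) (hh : Measurable (Function.uncurry h))
    (hint : Integrable (fun ω => h (W ω) (X ω)) P) :
    Integrable (Function.uncurry h) ((P.map W).prod (P.map X)) := by
  rw [← (indepFun_iff_map_prod_eq_prod_map_map hW.aemeasurable hX.aemeasurable).1 hWX]
  exact (integrable_map_measure hh.aestronglyMeasurable (hW.prodMk hX).aemeasurable).2 hint

theorem ProbabilityTheory.IndepFun.integrable_integral_comp (hWX : IndepFun W X P)
    (hW : Measurable W) (hX : Measurable X) (hh : Measurable (Function.uncurry h))
    (hint : Integrable (fun ω => h (W ω) (X ω)) P) :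
    Integrable (fun ω => ∫ ω', h (W ω) (X ω') ∂P) P := by
  simp_rw [integral_comp_eq_integral_map hX hh]
  exact (integrable_map_measure
    (hh.stronglyMeasurable.integral_prod_right' (ν := P.map X)).aestronglyMeasurable
    hW.aemeasurable).1 (hWX.integrable_uncurry hW hX hh hint).integral_prod_left

theorem ProbabilityTheory.IndepFun.integral_comp_eq_integral_integral (hWX : IndepFun W X P)
    (hW : Measurable W) (hX : Measurable X) (hh : Measurable (Function.uncurry h))
    (hint : Integrable (fun ω => h (W ω) (X ω)) P) :
    ∫ ω, h (W ω) (X ω) ∂P = ∫ ω, ∫ ω', h (W ω) (X ω') ∂P ∂P := by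
  simp_rw [integral_comp_eq_integral_map hX hh]
  symm
  calc ∫ ω, ∫ x, h (W ω) x ∂(P.map X) ∂P
      = ∫ w, ∫ x, h w x ∂(P.map X) ∂(P.map W) := (integral_map hW.aemeasurable
        (hh.stronglyMeasurable.integral_prod_right' (ν := P.map X)).aestronglyMeasurable).symm
    _ = ∫ p, Function.uncurry h p ∂((P.map W).prod (P.map X)) :=
        (integral_prod _ (hWX.integrable_uncurry hW hX hh hint)).symm
    _ = ∫ p, Function.uncurry h p ∂(P.map fun ω => (W ω, X ω)) := by
        rw [(indepFun_iff_map_prod_eq_prod_map_map hW.aemeasurable hX.aemeasurable).1 hWX]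
    _ = ∫ ω, h (W ω) (X ω) ∂P :=
        integral_map (hW.prodMk hX).aemeasurable hh.aestronglyMeasurable

end IndependentPairs

section Freezing

variable {Ω α β : Type*} {mα : MeasurableSpace α} {mβ : MeasurableSpace β} {X : Ω → β}

/-- Freezing lemma: conditioning on a σ-algebra independent of `X` integrates out `X` only. -/
theorem condExp_comp_ae_eq_integral_of_indep {m mΩ : MeasurableSpace Ω} {P : Measure Ω}
    [IsFiniteMeasure P] (hm : m ≤ mΩ) {Y : Ω → α} (hY : Measurable[m] Y) (hX : Measurable X)
    (hindep : Indep m (mβ.comap X) P) {g : α → β → ℝ} (hg : Measurable (Function.uncurry g))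
    (hint : Integrable (fun ω => g (Y ω) (X ω)) P) :
    P[fun ω => g (Y ω) (X ω) | m] =ᵐ[P] fun ω => ∫ ω', g (Y ω) (X ω') ∂P := by
  have hindepFun {W : Ω → ℝ × α} (hW : Measurable[m] W) : IndepFun W X P :=
    (IndepFun_iff_Indep W X P).2 (indep_of_indep_of_le_left hindep hW.comap_le)
  have hφ : StronglyMeasurable fun y => ∫ ω', g y (X ω') ∂P :=
    StronglyMeasurable.integral_prod_right' (ν := P) (f := fun p : α × Ω => g p.1 (X p.2))
      (hg.comp (measurable_fst.prodMk (hX.comp measurable_snd))).stronglyMeasurable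
  refine (ae_eq_condExp_of_forall_setIntegral_eq hm hint (fun s _ _ => ?_) (fun s hs _ => ?_)
    (hφ.comp_measurable hY).aestronglyMeasurable).symm
  · have hW : Measurable[m] fun ω => ((0 : ℝ), Y ω) := measurable_const.prodMk hY
    exact ((hindepFun hW).integrable_integral_comp (h := fun (p : ℝ × α) x => g p.2 x)
      (hW.mono hm le_rfl) hX (hg.comp (measurable_fst.snd.prodMk measurable_snd))
      hint).integrableOn
  -- integrate `1_s(ω) g(Y ω, x)` against the product law of `(1_s, Y)` and `X`
  set χ : Ω → ℝ := s.indicator 1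
  have hW : Measurable[m] fun ω => (χ ω, Y ω) :=
    (measurable_const.indicator hs : Measurable[m] χ).prodMk hY
  have hχ : ∀ f : Ω → ℝ, (fun ω => χ ω * f ω) = s.indicator f := fun f => funext fun ω => by
    by_cases hω : ω ∈ s <;> simp [χ, hω]
  have key := (hindepFun hW).integral_comp_eq_integral_integral
    (h := fun (p : ℝ × α) x => p.1 * g p.2 x) (hW.mono hm le_rfl) hX
    (measurable_fst.fst.mul (hg.comp (measurable_fst.snd.prodMk measurable_snd)))
    (by simpa only [hχ] using hint.indicator (hm s hs))
  simp only [integral_const_mul] at key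
  rw [← integral_indicator (hm s hs), ← integral_indicator (hm s hs), ← hχ, ← hχ, key]
  rfl

theorem add_integral_le_condExp_of_le {m mΩ : MeasurableSpace Ω} {P : Measure Ω}
    [IsFiniteMeasure P] (hm : m ≤ mΩ) {f h : Ω → ℝ} (hf : StronglyMeasurable[m] f)
    (hf_int : Integrable f P) (hh_int : Integrable h P) {Y : Ω → α} (hY : Measurable[m] Y)
    (hX : Measurable X) (hindep : Indep m (mβ.comap X) P) {g : α → β → ℝ}
    (hg : Measurable (Function.uncurry g)) (hg_int : Integrable (fun ω => g (Y ω) (X ω)) P)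
    (hle : ∀ ω, f ω + g (Y ω) (X ω) ≤ h ω) :
    (fun ω => f ω + ∫ ω', g (Y ω) (X ω') ∂P) ≤ᵐ[P] P[h | m] := by
  filter_upwards [condExp_comp_ae_eq_integral_of_indep hm hY hX hindep hg hg_int,
    condExp_add hf_int hg_int m, condExp_mono (hf_int.add hg_int) hh_int (ae_of_all _ hle)]
    with ω hfreeze hadd hmono
  rw [← hfreeze, ← condExp_of_stronglyMeasurable hm hf hf_int]
  exact hadd.symm.trans_le hmono

end Freezing

theorem ProbabilityTheory.iIndepFun.indep_iSup_comap_lt {Ω β : Type*} {mΩ : MeasurableSpace Ω}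
    {mβ : MeasurableSpace β} {P : Measure Ω} {Y : ℕ → Ω → β} (hY : iIndepFun Y P)
    (hY_meas : ∀ j, Measurable (Y j)) (i : ℕ) :
    Indep (⨆ j ∈ Set.Iio i, mβ.comap (Y j)) (mβ.comap (Y i)) P := by
  simpa using indep_iSup_of_disjoint (fun j => (hY_meas j).comap_le) hY.iIndep
    (Set.disjoint_singleton_right.2 (lt_irrefl i) : Disjoint (Set.Iio i) {i})

theorem measurable_of_recursion {Ω β γ : Type*} {mΩ : MeasurableSpace Ω} [MeasurableSpace β]
    [MeasurableSpace γ] {F : Filtration ℕ mΩ} {M : ℕ → Ω → β} {Y : ℕ → Ω → γ} {T : γ → β → β}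
    (hT : Measurable (Function.uncurry T)) (h0 : Measurable[F 0] (M 0))
    (hY : ∀ i, Measurable[F (i + 1)] (Y i)) (hM : ∀ i ω, M (i + 1) ω = T (Y i ω) (M i ω)) :
    ∀ i, Measurable[F i] (M i) := by
  intro i
  induction i with
  | zero => exact h0
  | succ i ih =>
    rw [funext (hM i)]
    exact hT.comp ((hY i).prodMk (ih.mono (F.mono i.le_succ) le_rfl))

theorem integrable_of_add_le_of_nonpos {Ω : Type*} {mΩ : MeasurableSpace Ω} {P : Measure Ω}
    [IsFiniteMeasure P] {m Z : ℕ → Ω → ℝ} (hm : ∀ i, AEStronglyMeasurable (m i) P)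
    (h0 : Integrable (m 0) P) (hZ : ∀ i, Integrable (Z i) P)
    (hle : ∀ i ω, m i ω + Z i ω ≤ m (i + 1) ω) (hnonpos : ∀ i ω, m i ω ≤ 0) :
    ∀ i, Integrable (m i) P
  | 0 => h0
  | i + 1 => integrable_of_le_of_le (hm (i + 1)) (ae_of_all _ (hle i)) (ae_of_all _ (hnonpos _))
      ((integrable_of_add_le_of_nonpos hm h0 hZ hle hnonpos i).add (hZ i)) (integrable_const 0)

section Densities

variable {χ : Type*} [MeasurableSpace χ] {ν : Measure χ} {p : χ → ℝ}

theorem integrable_withDensity_ofReal_iff (hp : Measurable p) (hp0 : ∀ x, 0 ≤ p x)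
    {g : χ → ℝ} : Integrable g (ν.withDensity fun x => ENNReal.ofReal (p x)) ↔
      Integrable (fun x => p x * g x) ν := by
  simp [integrable_withDensity_iff_integrable_smul' hp.ennreal_ofReal
    (ae_of_all _ fun _ => ENNReal.ofReal_lt_top), ENNReal.toReal_ofReal (hp0 _)]

theorem integral_withDensity_ofReal (hp : Measurable p) (hp0 : ∀ x, 0 ≤ p x) (g : χ → ℝ) :
    ∫ x, g x ∂(ν.withDensity fun x => ENNReal.ofReal (p x)) = ∫ x, p x * g x ∂ν := by
  simp [integral_withDensity_eq_integral_toReal_smul hp.ennreal_ofReal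
    (ae_of_all _ fun _ => ENNReal.ofReal_lt_top), ENNReal.toReal_ofReal (hp0 _)]

theorem integral_mul_log_div_nonneg {q : χ → ℝ} (hp : ∀ x, 0 < p x) (hq : ∀ x, 0 < q x)
    (hp_int : Integrable p ν) (hq_int : Integrable q ν) (hpq : ∫ x, q x ∂ν ≤ ∫ x, p x ∂ν)
    (h_int : Integrable (fun x => p x * log (p x / q x)) ν) :
    0 ≤ ∫ x, p x * log (p x / q x) ∂ν := by
  have hle : ∀ x, p x - q x ≤ p x * log (p x / q x) := fun x => by
    have := mul_le_mul_of_nonneg_left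
      (one_sub_inv_le_log_of_pos (div_pos (hp x) (hq x))) (hp x).le
    rwa [inv_div, mul_sub, mul_one, mul_div_cancel₀ _ (hp x).ne'] at this
  calc (0 : ℝ) ≤ ∫ x, p x - q x ∂ν := by rw [integral_sub hp_int hq_int]; linarith
    _ ≤ _ := integral_mono (hp_int.sub hq_int) h_int hle

end Densities

section MixtureLogRatio

variable {Ω Θ χ : Type*} [Fintype Θ] {mΩ : MeasurableSpace Ω} {P : Measure Ω}
  [MeasurableSpace χ] {ν : Measure χ} {L : Θ → χ → ℝ} {θ₀ : Θ}

theorem measurable_logMixtureRatio (hLm : ∀ θ, Measurable (L θ)) :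
    Measurable fun p : (Θ → ℝ) × χ => logMixtureRatio θ₀ p.1 (fun θ => L θ p.2) := by
  unfold logMixtureRatio
  fun_prop

theorem measurable_logMixtureRatio_right (hLm : ∀ θ, Measurable (L θ)) (y : Θ → ℝ) :
    Measurable fun x => logMixtureRatio θ₀ y (fun θ => L θ x) :=
  (measurable_logMixtureRatio hLm).comp (f := fun x => (y, x)) (by fun_prop)

theorem integrable_sum_abs_log_div (hL : ∀ θ x, 0 < L θ x) (hLm : ∀ θ, Measurable (L θ))
    (hKL : ∀ θ, Integrable (fun x => L θ₀ x * log (L θ₀ x / L θ x)) ν) :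
    Integrable (fun x => ∑ θ, |log (L θ₀ x / L θ x)|)
      (ν.withDensity fun x => ENNReal.ofReal (L θ₀ x)) :=
  integrable_finsetSum _ fun θ _ => by
    rw [integrable_withDensity_ofReal_iff (hLm θ₀) fun x => (hL θ₀ x).le]
    simpa only [abs_mul, abs_of_pos (hL θ₀ _)] using (hKL θ).abs

theorem integrable_logMixtureRatio_comp (hL : ∀ θ x, 0 < L θ x) (hLm : ∀ θ, Measurable (L θ))
    (hKL : ∀ θ, Integrable (fun x => L θ₀ x * log (L θ₀ x / L θ x)) ν) {Z : Ω → χ}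
    (hZ : Measurable Z) (hZlaw : P.map Z = ν.withDensity fun x => ENNReal.ofReal (L θ₀ x))
    {Y : Ω → Θ → ℝ} (hY : Measurable Y) (hYprob : ∀ ω, IsPosProbVec (Y ω)) :
    Integrable (fun ω => logMixtureRatio θ₀ (Y ω) (fun θ => L θ (Z ω))) P := by
  have hbound : Integrable (fun x => ∑ θ, |log (L θ₀ x / L θ x)|) (P.map Z) :=
    hZlaw ▸ integrable_sum_abs_log_div hL hLm hKL
  refine (hbound.comp_measurable hZ).mono'
    ((measurable_logMixtureRatio hLm).comp (hY.prodMk hZ)).aestronglyMeasurable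
    (ae_of_all _ fun ω => ?_)
  exact abs_log_div_sum_mul_le (fun θ => hL θ _) (fun θ => ((hYprob ω).pos θ).le)
    (hYprob ω).sum_eq_one θ₀

theorem integrable_logMixtureRatio (hL : ∀ θ x, 0 < L θ x) (hLm : ∀ θ, Measurable (L θ))
    (hKL : ∀ θ, Integrable (fun x => L θ₀ x * log (L θ₀ x / L θ x)) ν) {y : Θ → ℝ}
    (hy : IsPosProbVec y) :
    Integrable (fun x => logMixtureRatio θ₀ y (fun θ => L θ x))
      (ν.withDensity fun x => ENNReal.ofReal (L θ₀ x)) :=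
  integrable_logMixtureRatio_comp hL hLm hKL measurable_id Measure.map_id measurable_const
    fun _ => hy

theorem integral_logMixtureRatio_nonneg (hL : ∀ θ x, 0 < L θ x) (hLm : ∀ θ, Measurable (L θ))
    (hLdens : ∀ θ, ∫ x, L θ x ∂ν = 1)
    (hKL : ∀ θ, Integrable (fun x => L θ₀ x * log (L θ₀ x / L θ x)) ν) {y : Θ → ℝ}
    (hy : IsPosProbVec y) :
    0 ≤ ∫ x, logMixtureRatio θ₀ y (fun θ => L θ x)
      ∂(ν.withDensity fun x => ENNReal.ofReal (L θ₀ x)) := by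
  have hL_int : ∀ θ, Integrable (L θ) ν := fun θ =>
    .of_integral_ne_zero (by rw [hLdens]; exact one_ne_zero)
  have hmix_int : Integrable (fun x => ∑ θ, y θ * L θ x) ν :=
    integrable_finsetSum _ fun θ _ => (hL_int θ).const_mul _
  rw [integral_withDensity_ofReal (hLm θ₀) fun x => (hL θ₀ x).le]
  refine integral_mul_log_div_nonneg (hL θ₀) (fun x => hy.sum_mul_pos (hL · x))
    (hL_int θ₀) hmix_int (le_of_eq ?_) ?_
  · rw [integral_finsetSum _ fun θ _ => (hL_int θ).const_mul _]
    simp [integral_const_mul, hLdens, hy.sum_eq_one]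
  · exact (integrable_withDensity_ofReal_iff (hLm θ₀) fun x => (hL θ₀ x).le).1
      (integrable_logMixtureRatio hL hLm hKL hy)

theorem integral_logMixtureRatio_comp_nonneg (hL : ∀ θ x, 0 < L θ x)
    (hLm : ∀ θ, Measurable (L θ)) (hLdens : ∀ θ, ∫ x, L θ x ∂ν = 1)
    (hKL : ∀ θ, Integrable (fun x => L θ₀ x * log (L θ₀ x / L θ x)) ν) {Z : Ω → χ}
    (hZ : Measurable Z) (hZlaw : P.map Z = ν.withDensity fun x => ENNReal.ofReal (L θ₀ x))
    {y : Θ → ℝ} (hy : IsPosProbVec y) :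
    0 ≤ ∫ ω, logMixtureRatio θ₀ y (fun θ => L θ (Z ω)) ∂P := by
  rw [← integral_map (f := fun x => logMixtureRatio θ₀ y (fun θ => L θ x)) hZ.aemeasurable
    (measurable_logMixtureRatio_right hLm y).aestronglyMeasurable, hZlaw]
  exact integral_logMixtureRatio_nonneg hL hLm hLdens hKL hy

end MixtureLogRatio

section Observations

variable {Ω ι Θ : Type*} [Fintype ι] [Fintype Θ] {mΩ : MeasurableSpace Ω} {P : Measure Ω}
  {X : ι → Type*} [∀ k, MeasurableSpace (X k)]

theorem measurable_selfAwareStep_obs [DecidableEq ι] [DecidableEq Θ] {L : ∀ k, Θ → X k → ℝ}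
    (hLm : ∀ k θ, Measurable (L k θ)) (a : ι → ι → ℝ) (θTX : Θ) :
    Measurable (Function.uncurry fun (x : ∀ k, X k) (μ : ι → Θ → ℝ) =>
      selfAwareStep a θTX (fun k θ => L k θ (x k)) μ) :=
  (measurable_selfAwareStep a θTX).comp (f := fun p : (∀ k, X k) × (ι → Θ → ℝ) =>
    ((fun k θ => L k θ (p.1 k)), p.2)) (by fun_prop)

theorem measurable_sum_mul_logMixtureRatio {L : ∀ k, Θ → X k → ℝ}
    (hLm : ∀ k θ, Measurable (L k θ)) (θ₀ : Θ) (v : ι → ℝ) :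
    Measurable (Function.uncurry fun (μ : ι → Θ → ℝ) (x : ∀ k, X k) =>
      ∑ k, v k * logMixtureRatio θ₀ (μ k) (fun θ => L k θ (x k))) :=
  Finset.measurable_sum _ fun k _ => ((measurable_logMixtureRatio (hLm k)).comp
    (f := fun p : (ι → Θ → ℝ) × (∀ k, X k) => (p.1 k, p.2 k)) (by fun_prop)).const_mul _

theorem integral_sum_mul_logMixtureRatio_comp {ν : ∀ k, Measure (X k)} {L : ∀ k, Θ → X k → ℝ}
    {θ₀ : Θ} (hL : ∀ k θ x, 0 < L k θ x) (hLm : ∀ k θ, Measurable (L k θ))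
    (hKL : ∀ k θ, Integrable (fun x => L k θ₀ x * log (L k θ₀ x / L k θ x)) (ν k))
    {Z Z' : Ω → ∀ k, X k} (hZ : ∀ k, Measurable fun ω => Z ω k)
    (hZ' : ∀ k, Measurable fun ω => Z' ω k)
    (hZlaw : ∀ k, P.map (fun ω => Z ω k) = (ν k).withDensity fun x => ENNReal.ofReal (L k θ₀ x))
    (hZ'law : ∀ k, P.map (fun ω => Z' ω k) = (ν k).withDensity fun x => ENNReal.ofReal (L k θ₀ x))
    {y : ι → Θ → ℝ} (hy : ∀ k, IsPosProbVec (y k)) (v : ι → ℝ) :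
    ∫ ω, ∑ k, v k * logMixtureRatio θ₀ (y k) (fun θ => L k θ (Z ω k)) ∂P =
      ∑ k, v k * ∫ ω, logMixtureRatio θ₀ (y k) (fun θ => L k θ (Z' ω k)) ∂P := by
  rw [integral_finsetSum _ fun k _ => (integrable_logMixtureRatio_comp (hL k) (hLm k) (hKL k)
    (hZ k) (hZlaw k) measurable_const fun _ => hy k).const_mul _]
  refine sum_congr rfl fun k _ => ?_
  rw [integral_const_mul]
  have hident : IdentDistrib (fun ω => Z ω k) (fun ω => Z' ω k) P P :=
    ⟨(hZ k).aemeasurable, (hZ' k).aemeasurable, (hZlaw k).trans (hZ'law k).symm⟩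
  exact congrArg (v k * ·)
    (hident.comp (measurable_logMixtureRatio_right (hLm k) (y k))).integral_eq

end Observations

section Filtration

variable {Ω ι : Type*} {mΩ : MeasurableSpace Ω} {X : ι → Type*} [∀ k, MeasurableSpace (X k)]
  {ξ : ∀ k, ℕ → Ω → X k} {F : Filtration ℕ mΩ}

theorem measurable_obs_of_eq_iSup
    (hF : ∀ i, F i = ⨆ k, ⨆ j ∈ Icc 1 i, MeasurableSpace.comap (ξ k j) inferInstance) (i : ℕ) :
    Measurable[F (i + 1)] fun ω k => ξ k (i + 1) ω := by
  refine @measurable_pi_lambda _ _ _ (F (i + 1)) _ _ fun k => Measurable.of_comap_le ?_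
  rw [hF]
  exact le_iSup_of_le k (le_iSup₂_of_le (i + 1) (by simp) le_rfl)

theorem le_iSup_comap_obs_of_eq_iSup
    (hF : ∀ i, F i = ⨆ k, ⨆ j ∈ Icc 1 i, MeasurableSpace.comap (ξ k j) inferInstance) (i : ℕ) :
    F i ≤ ⨆ j ∈ Set.Iio i, MeasurableSpace.pi.comap fun ω k => ξ k (j + 1) ω := by
  rw [hF]
  refine iSup_le fun k => iSup₂_le fun j hj => ?_
  obtain ⟨j, rfl⟩ : ∃ j', j = j' + 1 := ⟨j - 1, by grind⟩
  refine le_iSup₂_of_le (f := fun j _ => MeasurableSpace.pi.comap fun ω k => ξ k (j + 1) ω) j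
    (by grind) ?_
  exact ((measurable_pi_apply k).comp
    (comap_measurable (m := MeasurableSpace.pi) fun ω (k : ι) => ξ k (j + 1) ω)).comap_le

end Filtration


theorem submartingale_sequence_with_self_awareness_general
    {Ω : Type} [mΩ : MeasurableSpace Ω] (P : Measure Ω) [IsProbabilityMeasure P]
    (K H : ℕ)
    (X : Fin K → Type) [∀ k, MeasurableSpace (X k)]
    (ν : ∀ k, Measure (X k))
    (L : ∀ k : Fin K, Fin H → X k → ℝ)
    (θ0 : Fin H)
    (hLpos : ∀ k θ x, 0 < L k θ x)
    (hLmeas : ∀ k θ, Measurable (L k θ))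
    (hLdens : ∀ k θ, ∫ x, L k θ x ∂(ν k) = 1)
    (ξ : ∀ k : Fin K, ℕ → Ω → X k)
    (hξmeas : ∀ k i, Measurable (ξ k i))
    (hξdist : ∀ k (i : ℕ), 1 ≤ i →
      Measure.map (ξ k i) P = (ν k).withDensity (fun x => ENNReal.ofReal (L k θ0 x)))
    (hξindep : iIndepFun
      (fun (i : ℕ) (ω : Ω) (k : Fin K) => ξ k (i + 1) ω) P)
    (hKL : ∀ k θ θ',
      Integrable (fun x => L k θ x * Real.log (L k θ x / L k θ' x)) (ν k))
    (a : Fin K → Fin K → ℝ)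
    (ha_nonneg : ∀ ℓ k, 0 ≤ a ℓ k)
    (ha_stoch : ∀ k, ∑ ℓ, a ℓ k = 1)
    (v : Fin K → ℝ)
    (hv_pos : ∀ ℓ, 0 < v ℓ)
    (hv_eig : ∀ ℓ, ∑ k, a ℓ k * v k = v ℓ)
    (θTX : Fin H)
    (hθTX : θTX = θ0)
    (μb ψ ψh : Fin K → ℕ → Fin H → Ω → ℝ)
    (μinit : Fin K → Fin H → ℝ)
    (hμinit_pos : ∀ k θ, 0 < μinit k θ)
    (hμinit_sum : ∀ k, ∑ θ, μinit k θ = 1)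
    (hμb0 : ∀ k θ ω, μb k 0 θ ω = μinit k θ)
    (hψ : ∀ k (i : ℕ) θ ω, ψ k (i + 1) θ ω =
      μb k i θ ω * L k θ (ξ k (i + 1) ω) /
        ∑ θ', μb k i θ' ω * L k θ' (ξ k (i + 1) ω))
    (hψh_tx : ∀ k (i : ℕ) ω, ψh k (i + 1) θTX ω = ψ k (i + 1) θTX ω)
    (hψh_ntx : ∀ k (i : ℕ) θ ω, θ ≠ θTX →
      ψh k (i + 1) θ ω = (1 - ψ k (i + 1) θTX ω) / ((H : ℝ) - 1))
    (hcomb : ∀ k (i : ℕ) θ ω, μb k (i + 1) θ ω =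
      Real.exp (a k k * Real.log (ψ k (i + 1) θ ω) +
          ∑ ℓ ∈ Finset.univ.erase k, a ℓ k * Real.log (ψh ℓ (i + 1) θ ω)) /
        ∑ θ', Real.exp (a k k * Real.log (ψ k (i + 1) θ' ω) +
          ∑ ℓ ∈ Finset.univ.erase k, a ℓ k * Real.log (ψh ℓ (i + 1) θ' ω)))
    (F : Filtration ℕ mΩ)
    (hF : ∀ i : ℕ, F i = ⨆ k : Fin K, ⨆ j ∈ Finset.Icc 1 i,
      MeasurableSpace.comap (ξ k j) inferInstance) :
    (∀ i : ℕ,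
      (fun ω => (∑ k, v k * Real.log (μb k i θTX ω)) +
          ∑ k, v k * ∫ ω', Real.log (L k θ0 (ξ k 1 ω') /
            ∑ θ', μb k i θ' ω * L k θ' (ξ k 1 ω')) ∂P)
        ≤ᵐ[P] P[(fun ω => ∑ k, v k * Real.log (μb k (i + 1) θTX ω)) | F i]) ∧
    Submartingale (fun (i : ℕ) ω => ∑ k, v k * Real.log (μb k i θTX ω)) F P ∧
    (∀ i : ℕ, ∀ᵐ ω ∂P, (∑ k, v k * Real.log (μb k i θTX ω)) ≤ 0) := by
  subst hθTX
  let M : ℕ → Ω → Fin K → Fin H → ℝ := fun i ω k θ => μb k i θ ω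
  let Obs : ℕ → Ω → ∀ k, X k := fun i ω k => ξ k (i + 1) ω
  let m : ℕ → Ω → ℝ := fun i ω => ∑ k, v k * Real.log (M i ω k θTX)
  let g : (Fin K → Fin H → ℝ) → (∀ k, X k) → ℝ :=
    fun μ x => ∑ k, v k * logMixtureRatio θTX (μ k) (fun θ => L k θ (x k))
  have hv : ∀ k, 0 ≤ v k := fun k => (hv_pos k).le
  have hstep : ∀ i ω, M (i + 1) ω = selfAwareStep a θTX (fun k θ => L k θ (Obs i ω k)) (M i ω) :=
    fun i ω => eq_selfAwareStep (hψ · i · ω) (hψh_tx · i ω)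
      (fun k θ h => by simpa using hψh_ntx k i θ ω h) (hcomb · i · ω)
  have hprob : ∀ i ω k, IsPosProbVec (M i ω k) := isPosProbVec_of_eq_selfAwareStep
    (fun ω k => ⟨by simpa [M, hμb0] using hμinit_pos k, by simpa [M, hμb0] using hμinit_sum k⟩)
    hstep
  have hObs : ∀ i, Measurable (Obs i) := fun i => measurable_pi_lambda _ fun k => hξmeas k _
  have hM : ∀ i, Measurable[F i] (M i) := measurable_of_recursion
    (measurable_selfAwareStep_obs hLmeas a θTX) (by simp [M, hμb0]) (measurable_obs_of_eq_iSup hF)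
    hstep
  have hm_F : ∀ i, StronglyMeasurable[F i] (m i) := fun i =>
    ((measurable_sum_mul_log v θTX).comp (hM i)).stronglyMeasurable
  have hle : ∀ i ω, m i ω + g (M i ω) (Obs i ω) ≤ m (i + 1) ω := fun i ω => by
    simp only [m, hstep]
    exact sum_mul_log_add_le_sum_mul_log_selfAwareStep ha_nonneg ha_stoch hv hv_eig
      (fun k θ => hLpos k θ _) (hprob i ω) θTX
  have hg_int : ∀ i, Integrable (fun ω => g (M i ω) (Obs i ω)) P := fun i =>
    integrable_finsetSum _ fun k _ => (integrable_logMixtureRatio_comp (hLpos k) (hLmeas k)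
      (hKL k θTX) (hξmeas k _) (hξdist k _ (by omega))
      ((measurable_pi_apply k).comp ((hM i).mono (F.le i) le_rfl)) (hprob i · k)).const_mul _
  have hm_int : ∀ i, Integrable (m i) P := integrable_of_add_le_of_nonpos
    (fun i => ((hm_F i).mono (F.le i)).aestronglyMeasurable) (by simp [m, M, hμb0]) hg_int hle
    fun i ω => sum_mul_log_nonpos hv (hprob i ω) θTX
  have hdrift : ∀ i, (fun ω => m i ω + ∑ k, v k * ∫ ω', Real.log (L k θTX (ξ k 1 ω') /
      ∑ θ', μb k i θ' ω * L k θ' (ξ k 1 ω')) ∂P) ≤ᵐ[P] P[m (i + 1) | F i] := by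
    intro i
    convert add_integral_le_condExp_of_le (F.le i) (hm_F i) (hm_int i) (hm_int (i + 1)) (hM i)
      (hObs i) (indep_of_indep_of_le_left (hξindep.indep_iSup_comap_lt hObs i)
        (le_iSup_comap_obs_of_eq_iSup hF i))
      (measurable_sum_mul_logMixtureRatio hLmeas θTX v) (hg_int i) (hle i) using 3 with ω
    exact (integral_sum_mul_logMixtureRatio_comp hLpos hLmeas (hKL · θTX) (fun k => hξmeas k _)
      (fun k => hξmeas k 1) (fun k => hξdist k _ (by omega)) (fun k => hξdist k 1 le_rfl)
      (hprob i ω) v).symm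
  refine ⟨hdrift, submartingale_nat hm_F hm_int fun i => ?_,
    fun i => ae_of_all _ fun ω => sum_mul_log_nonpos hv (hprob i ω) θTX⟩
  refine EventuallyLE.trans (ae_of_all _ fun ω => le_add_of_nonneg_right ?_) (hdrift i)
  exact sum_nonneg fun k _ => mul_nonneg (hv k) (integral_logMixtureRatio_comp_nonneg (hLpos k)
    (hLmeas k) (hLdens k) (hKL k θTX) (hξmeas k 1) (hξdist k 1 le_rfl) (hprob i ω k))

theorem submartingale_sequence_with_self_awareness
    {Ω : Type} [mΩ : MeasurableSpace Ω] (P : Measure Ω) [IsProbabilityMeasure P]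
    (K H : ℕ) (hK : 0 < K) (hH : 2 ≤ H)
    (X : Fin K → Type) [∀ k, MeasurableSpace (X k)]
    (ν : ∀ k, Measure (X k))
    (L : ∀ k : Fin K, Fin H → X k → ℝ)
    (θ0 : Fin H)
    (hLpos : ∀ k θ x, 0 < L k θ x)
    (hLmeas : ∀ k θ, Measurable (L k θ))
    (hLdens : ∀ k θ, ∫ x, L k θ x ∂(ν k) = 1)
    (ξ : ∀ k : Fin K, ℕ → Ω → X k)
    (hξmeas : ∀ k i, Measurable (ξ k i))
    (hξdist : ∀ k (i : ℕ), 1 ≤ i →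
      Measure.map (ξ k i) P = (ν k).withDensity (fun x => ENNReal.ofReal (L k θ0 x)))
    (hξindep : iIndepFun
      (fun (i : ℕ) (ω : Ω) (k : Fin K) => ξ k (i + 1) ω) P)
    (hKL : ∀ k θ θ',
      Integrable (fun x => L k θ x * Real.log (L k θ x / L k θ' x)) (ν k))
    (a : Fin K → Fin K → ℝ)
    (ha_nonneg : ∀ ℓ k, 0 ≤ a ℓ k)
    (ha_stoch : ∀ k, ∑ ℓ, a ℓ k = 1)
    (ha_prim : ∃ n : ℕ, ∀ ℓ k, 0 < ((Matrix.of a) ^ n) ℓ k)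
    (v : Fin K → ℝ)
    (hv_pos : ∀ ℓ, 0 < v ℓ)
    (hv_sum : ∑ ℓ, v ℓ = 1)
    (hv_eig : ∀ ℓ, ∑ k, a ℓ k * v k = v ℓ)
    (ha_self : ∀ k, 0 < a k k)
    (θTX : Fin H)
    (hθTX : θTX = θ0)
    (μb ψ ψh : Fin K → ℕ → Fin H → Ω → ℝ)
    (μinit : Fin K → Fin H → ℝ)
    (hμinit_pos : ∀ k θ, 0 < μinit k θ)
    (hμinit_sum : ∀ k, ∑ θ, μinit k θ = 1)
    (hμb0 : ∀ k θ ω, μb k 0 θ ω = μinit k θ)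
    (hψ : ∀ k (i : ℕ) θ ω, ψ k (i + 1) θ ω =
      μb k i θ ω * L k θ (ξ k (i + 1) ω) /
        ∑ θ', μb k i θ' ω * L k θ' (ξ k (i + 1) ω))
    (hψh_tx : ∀ k (i : ℕ) ω, ψh k (i + 1) θTX ω = ψ k (i + 1) θTX ω)
    (hψh_ntx : ∀ k (i : ℕ) θ ω, θ ≠ θTX →
      ψh k (i + 1) θ ω = (1 - ψ k (i + 1) θTX ω) / ((H : ℝ) - 1))
    (hcomb : ∀ k (i : ℕ) θ ω, μb k (i + 1) θ ω =
      Real.exp (a k k * Real.log (ψ k (i + 1) θ ω) +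
          ∑ ℓ ∈ Finset.univ.erase k, a ℓ k * Real.log (ψh ℓ (i + 1) θ ω)) /
        ∑ θ', Real.exp (a k k * Real.log (ψ k (i + 1) θ' ω) +
          ∑ ℓ ∈ Finset.univ.erase k, a ℓ k * Real.log (ψh ℓ (i + 1) θ' ω)))
    (F : Filtration ℕ mΩ)
    (hF : ∀ i : ℕ, F i = ⨆ k : Fin K, ⨆ j ∈ Finset.Icc 1 i,
      MeasurableSpace.comap (ξ k j) inferInstance) :
    (∀ i : ℕ,
      (fun ω => (∑ k, v k * Real.log (μb k i θTX ω)) +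
          ∑ k, v k * ∫ ω', Real.log (L k θ0 (ξ k 1 ω') /
            ∑ θ', μb k i θ' ω * L k θ' (ξ k 1 ω')) ∂P)
        ≤ᵐ[P] P[(fun ω => ∑ k, v k * Real.log (μb k (i + 1) θTX ω)) | F i]) ∧
    Submartingale (fun (i : ℕ) ω => ∑ k, v k * Real.log (μb k i θTX ω)) F P ∧
    (∀ i : ℕ, ∀ᵐ ω ∂P, (∑ k, v k * Real.log (μb k i θTX ω)) ≤ 0) :=
  submartingale_sequence_with_self_awareness_general (mΩ := mΩ) P K H X ν L θ0 hLpos hLmeas hLdens ξ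
    hξmeas hξdist hξindep hKL a ha_nonneg ha_stoch v hv_pos hv_eig θTX hθTX μb ψ ψh μinit hμinit_pos
    hμinit_sum hμb0 hψ hψh_tx hψh_ntx hcomb F hF
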